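/- For the Böhm sequence of fixed point combinators, Y_{n+1} = Y_n δ with δ = λa.λb.b(ab) and Y₁ = η η (η = λx.λf.f(xxf)): each Y_n is a fixed point combinator, i.e., Y_n M =β M (Y_n M) for all terms M and all n ≥ 1. -/
import Mathlib


inductive Lam : Type
  | var : Nat → Lam
  | app : Lam → Lam → Lam
  | lam : Lam → Lam
deriving DecidableEq

namespace Lam

/-- shift free de Bruijn indices ≥ d up by 1 -/
def lift (d : Nat) : Lam → Lam
  | var n => if n < d then var n else var (n+1)
  | app M N => app (lift d M) (lift d N)
  | lam M => lam (lift (d+1) M)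

/-- capture-avoiding substitution of N for index k -/
def subst (k : Nat) (N : Lam) : Lam → Lam
  | var n => if n = k then N else if k < n then var (n-1) else var n
  | app A B => app (subst k N A) (subst k N B)
  | lam A => lam (subst (k+1) (lift 0 N) A)

/-- one-step β-reduction (compatible closure of (λ.M)N → M[0:=N]) -/
inductive Beta : Lam → Lam → Prop
  | beta (M N : Lam) : Beta (app (lam M) N) (subst 0 N M)
  | appL {M M'} (N) : Beta M M' → Beta (app M N) (app M' N)
  | appR (M) {N N'} : Beta N N' → Beta (app M N) (app M N')
  | lam {M M'} : Beta M M' → Beta (lam M) (lam M')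

/-- finite multi-step β-reduction -/
abbrev BetaStar : Lam → Lam → Prop := Relation.ReflTransGen Beta

/-- β-conversion -/
abbrev BetaConv : Lam → Lam → Prop := Relation.EqvGen Beta

end Lam

open Lam

def eta : Lam :=
  Lam.lam (Lam.lam (Lam.app (Lam.var 0) (Lam.app (Lam.app (Lam.var 1) (Lam.var 1)) (Lam.var 0))))
def delta : Lam := Lam.lam (Lam.lam (Lam.app (Lam.var 0) (Lam.app (Lam.var 1) (Lam.var 0))))

/-- Böhm sequence: Y 1 = η η, Y (n+1) = Y n δ (Y 0 is a dummy value) -/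
def Yb : Nat → Lam
  | 0 => Lam.app eta eta
  | 1 => Lam.app eta eta
  | n+2 => Lam.app (Yb (n+1)) delta


namespace Lam

lemma convAppL {M M' : Lam} (N : Lam) (h : BetaConv M M') :
    BetaConv (app M N) (app M' N) := by
  induction h with
  | rel a b hb => exact Relation.EqvGen.rel _ _ (Beta.appL N hb)
  | refl a => exact Relation.EqvGen.refl _
  | symm a b _ ih => exact Relation.EqvGen.symm _ _ ih
  | trans a b c _ _ ih1 ih2 => exact Relation.EqvGen.trans _ _ _ ih1 ih2

lemma star_to_conv {M N : Lam} (h : BetaStar M N) : BetaConv M N := by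
  induction h with
  | refl => exact Relation.EqvGen.refl _
  | tail _ hb ih => exact Relation.EqvGen.trans _ _ _ ih (Relation.EqvGen.rel _ _ hb)

end Lam

lemma lift_eta (d : Nat) : lift d eta = eta := by
  simp [eta, lift]

lemma lift_delta (d : Nat) : lift d delta = delta := by
  simp [delta, lift]

lemma subst_eta (k : Nat) (N : Lam) : subst k N eta = eta := by
  simp [eta, subst]

lemma subst_delta (k : Nat) (N : Lam) : subst k N delta = delta := by
  simp [delta, subst]

lemma lift_app (d : Nat) (M N : Lam) :
    lift d (Lam.app M N) = Lam.app (lift d M) (lift d N) := rfl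

lemma subst_app (k : Nat) (N A B : Lam) :
    subst k N (Lam.app A B) = Lam.app (subst k N A) (subst k N B) := rfl

lemma lift_Yb (d : Nat) : ∀ n, lift d (Yb n) = Yb n := by
  intro n
  induction n with
  | zero => simp only [Yb, lift_app, lift_eta]
  | succ m ih =>
    match m with
    | 0 => simp only [Yb, lift_app, lift_eta]
    | m+1 =>
      rw [show Yb (m+1+1) = Lam.app (Yb (m+1)) delta from rfl, lift_app, lift_delta, ih]

lemma subst_Yb (k : Nat) (N : Lam) : ∀ n, subst k N (Yb n) = Yb n := by
  intro n
  induction n with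
  | zero => simp only [Yb, subst_app, subst_eta]
  | succ m ih =>
    match m with
    | 0 => simp only [Yb, subst_app, subst_eta]
    | m+1 =>
      rw [show Yb (m+1+1) = Lam.app (Yb (m+1)) delta from rfl, subst_app, subst_delta, ih]

/-- δ A B →* B (A B) when A is lift/subst invariant (closed). -/
lemma delta_red (A B : Lam) (hl : lift 0 A = A) (hs : subst 0 B A = A) :
    BetaStar (Lam.app (Lam.app delta A) B) (Lam.app B (Lam.app A B)) := by
  have s1 : Beta (Lam.app (Lam.app delta A) B)
      (Lam.app (Lam.lam (Lam.app (Lam.var 0) (Lam.app A (Lam.var 0)))) B) := by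
    have := Beta.appL (M := Lam.app delta A)
      (M' := subst 0 A (Lam.lam (Lam.app (Lam.var 0) (Lam.app (Lam.var 1) (Lam.var 0)))))
      B (Beta.beta _ _)
    simpa [subst, hl] using this
  have s2 : Beta (Lam.app (Lam.lam (Lam.app (Lam.var 0) (Lam.app A (Lam.var 0)))) B)
      (Lam.app B (Lam.app A B)) := by
    have := Beta.beta (Lam.app (Lam.var 0) (Lam.app A (Lam.var 0))) B
    simpa [subst, hs] using this
  exact Relation.ReflTransGen.head s1 (Relation.ReflTransGen.single s2)

lemma etaeta_red (M : Lam) :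
    BetaStar (Lam.app (Lam.app eta eta) M) (Lam.app M (Lam.app (Lam.app eta eta) M)) := by
  have s1 : Beta (Lam.app (Lam.app eta eta) M)
      (Lam.app (Lam.lam (Lam.app (Lam.var 0) (Lam.app (Lam.app eta eta) (Lam.var 0)))) M) := by
    have := Beta.appL (M := Lam.app eta eta)
      (M' := subst 0 eta (Lam.lam (Lam.app (Lam.var 0)
        (Lam.app (Lam.app (Lam.var 1) (Lam.var 1)) (Lam.var 0)))))
      M (Beta.beta _ _)
    simpa [subst, lift_eta] using this
  have s2 : Beta (Lam.app (Lam.lam (Lam.app (Lam.var 0) (Lam.app (Lam.app eta eta) (Lam.var 0)))) M)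
      (Lam.app M (Lam.app (Lam.app eta eta) M)) := by
    have := Beta.beta (Lam.app (Lam.var 0) (Lam.app (Lam.app eta eta) (Lam.var 0))) M
    simpa [subst, subst_eta] using this
  exact Relation.ReflTransGen.head s1 (Relation.ReflTransGen.single s2)

theorem boehm_sequence_fpc :
    ∀ n : Nat, 1 ≤ n → ∀ M : Lam, BetaConv (Lam.app (Yb n) M) (Lam.app M (Lam.app (Yb n) M)) := by
  intro n
  induction n with
  | zero => intro h; omega
  | succ m ih =>
    intro _ M
    match m with
    | 0 =>
      have := Lam.star_to_conv (etaeta_red M)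
      simpa [Yb] using this
    | m+1 =>
      have hIH := ih (by omega) delta
      have hc : BetaConv (Yb (m+2)) (Lam.app delta (Yb (m+2))) := by
        simpa [Yb] using hIH
      have h1 : BetaConv (Lam.app (Yb (m+2)) M) (Lam.app (Lam.app delta (Yb (m+2))) M) :=
        Lam.convAppL M hc
      have h2 : BetaStar (Lam.app (Lam.app delta (Yb (m+2))) M)
          (Lam.app M (Lam.app (Yb (m+2)) M)) :=
        delta_red _ _ (lift_Yb 0 _) (subst_Yb 0 M _)
      exact Relation.EqvGen.trans _ _ _ h1 (Lam.star_to_conv h2)
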